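/- arXiv:2202.07069 — 2 statements merged into one kernel-verified Lean document; each statement's English description precedes it below -/
import Mathlib

section
/- Let V be a commutative unital quantale, F : Type u ⥤ Type u a functor, L a lifting of F to V-Cat, and (X,a) a V-category. Let Λ be a family of generalized predicate liftings for (F,L), say λ_j with parameter V-category (A_j,α_j) for j in an index set J. Suppose that every V-functor h : (F.obj X, L a) → (V,hom) is of the form λ_j(f) for some j ∈ J and some V-functor f : (X,a) → (A_j,α_j). Then for all 𝔵,𝔶 ∈ F.obj X, L a 𝔵 𝔶 = ⨅_{j ∈ J} ⨅_{f : (X,a) → (A_j,α_j) V-functor} hom (λ_j(f) 𝔵) (λ_j(f) 𝔶). -/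
universe u v w

open CategoryTheory

/-- `V` is a (commutative unital) quantale: the tensor distributes over suprema. -/
def QuantaleLaw (V : Type u) [CompleteLattice V] [CommMonoid V] : Prop :=
  ∀ (u : V) (s : Set V), u * sSup s = ⨆ v ∈ s, u * v

/-- Internal hom of the quantale: `hom u w = ⨆ {v | u ⊗ v ≤ w}`. -/
def qhom {V : Type u} [CompleteLattice V] [CommMonoid V] (u w : V) : V :=
  sSup {v | u * v ≤ w}

/-- `a` is a `V`-category structure on `X`. -/
def IsVCat {V : Type u} [CompleteLattice V] [CommMonoid V] {X : Type v}
    (a : X → X → V) : Prop :=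
  (∀ x, (1 : V) ≤ a x x) ∧ ∀ x y z, a x y * a y z ≤ a x z

/-- `f` is a `V`-functor from `(X,a)` to `(Y,b)`. -/
def IsVFunctor {V : Type u} [CompleteLattice V] {X : Type v} {Y : Type w}
    (a : X → X → V) (b : Y → Y → V) (f : X → Y) : Prop :=
  ∀ x y, a x y ≤ b (f x) (f y)

/-- `f` is an initial `V`-functor from `(X,a)` to `(Y,b)`. -/
def IsInitialVFunctor {V : Type u} {X : Type v} {Y : Type w}
    (a : X → X → V) (b : Y → Y → V) (f : X → Y) : Prop :=
  ∀ x y, a x y = b (f x) (f y)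

/-- The `V`-category structure of the power `V^κ`. -/
def powStr {V : Type u} [CompleteLattice V] [CommMonoid V] (κ : Type v)
    (p q : κ → V) : V :=
  ⨅ i, qhom (p i) (q i)

/-- The graph of a function, as a `V`-relation: `k` on the graph, `⊥` elsewhere. -/
def fnGraph {V : Type u} [CompleteLattice V] [CommMonoid V] {X : Type v} {Y : Type w}
    (f : X → Y) : X → Y → V :=
  fun x y => ⨆ _ : f x = y, (1 : V)

/-- A lifting of a `Set`-functor `F` to `V`-Cat. -/
structure Lifting (V : Type u) [CompleteLattice V] [CommMonoid V]
    (F : Type u ⥤ Type u) where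
  str : ∀ {X : Type u}, (X → X → V) → F.obj X → F.obj X → V
  isVCat : ∀ {X : Type u} (a : X → X → V), IsVCat a → IsVCat (str a)
  map : ∀ {X Y : Type u} (a : X → X → V) (b : Y → Y → V) (f : X → Y),
    IsVCat a → IsVCat b → IsVFunctor a b f →
    IsVFunctor (str a) (str b) (F.map (TypeCat.ofHom f))

/-- A `κ`-ary `V`-valued predicate lifting for a `Set`-functor `F`. -/
structure PredLifting (V : Type u) [CompleteLattice V] [CommMonoid V]
    (F : Type u ⥤ Type u) (κ : Type u) where
  app : ∀ {X : Type u}, (X → κ → V) → F.obj X → V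
  natural : ∀ {X Y : Type u} (f : X → Y) (p : Y → κ → V) (t : F.obj X),
    app (fun x => p (f x)) t = app p (F.map (TypeCat.ofHom f) t)

/-- A predicate lifting is monotone if it preserves the pointwise order of predicates. -/
def PredLifting.Mono {V : Type u} [CompleteLattice V] [CommMonoid V]
    {F : Type u ⥤ Type u} {κ : Type u} (lam : PredLifting V F κ) : Prop :=
  ∀ (X : Type u) (p q : X → κ → V), (∀ x i, p x i ≤ q x i) →
    ∀ t, lam.app p t ≤ lam.app q t

/-- A predicate lifting is compatible with a lifting `L` if it lifts `V`-functorial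
predicates to `V`-functorial predicates. -/
def Compatible {V : Type u} [CompleteLattice V] [CommMonoid V] {F : Type u ⥤ Type u}
    (L : Lifting V F) {κ : Type u} (lam : PredLifting V F κ) : Prop :=
  ∀ (X : Type u) (a : X → X → V), IsVCat a → ∀ f : X → κ → V,
    IsVFunctor a (powStr κ) f → IsVFunctor (L.str a) qhom (lam.app f)

/-- The Kantorovich `V`-category structure on `F.obj X` induced by a family of
predicate liftings. -/
noncomputable def kantStr {V : Type u} [CompleteLattice V] [CommMonoid V]
    {F : Type u ⥤ Type u} {ι : Type v} {κ : ι → Type u}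
    (Λ : ∀ l, PredLifting V F (κ l)) {X : Type u} (a : X → X → V)
    (t s : F.obj X) : V :=
  ⨅ l, ⨅ f : {f : X → κ l → V // IsVFunctor a (powStr (κ l)) f},
    qhom ((Λ l).app f.1 t) ((Λ l).app f.1 s)

/-- A generalized predicate lifting for `(F, L)` with parameter `V`-category `(A, α)`. -/
structure GenPredLifting (V : Type u) [CompleteLattice V] [CommMonoid V]
    (F : Type u ⥤ Type u) (L : Lifting V F) (A : Type u) (α : A → A → V) where
  app : ∀ {Z : Type u}, (Z → Z → V) → (Z → A) → F.obj Z → V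
  isVFunctor : ∀ {Z : Type u} (c : Z → Z → V), IsVCat c → ∀ f : Z → A,
    IsVFunctor c α f → IsVFunctor (L.str c) qhom (app c f)
  natural : ∀ {Z Z' : Type u} (c : Z → Z → V) (c' : Z' → Z' → V),
    IsVCat c → IsVCat c' → ∀ (u : Z → Z'), IsVFunctor c c' u →
    ∀ (g : Z' → A), IsVFunctor c' α g →
    ∀ t : F.obj Z, app c (fun z => g (u z)) t = app c' g (F.map (TypeCat.ofHom u) t)

/-- A lax extension of a `Set`-functor `F` to `V`-Rel. -/
structure LaxExt (V : Type u) [CompleteLattice V] [CommMonoid V]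
    (F : Type u ⥤ Type u) where
  ext : ∀ {X Y : Type u}, (X → Y → V) → F.obj X → F.obj Y → V
  mono : ∀ {X Y : Type u} (r r' : X → Y → V), (∀ x y, r x y ≤ r' x y) →
    ∀ t s, ext r t s ≤ ext r' t s
  comp : ∀ {X Y Z : Type u} (r : X → Y → V) (s : Y → Z → V)
    (t : F.obj X) (w : F.obj Z),
    (⨆ u : F.obj Y, ext r t u * ext s u w) ≤
      ext (fun x z => ⨆ y, r x y * s y z) t w
  lax_map : ∀ {X Y : Type u} (f : X → Y) (t : F.obj X),
    (1 : V) ≤ ext (fnGraph f) t (F.map (TypeCat.ofHom f) t)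
  lax_map_op : ∀ {X Y : Type u} (f : X → Y) (t : F.obj X),
    (1 : V) ≤ ext (fun y x => fnGraph f x y) (F.map (TypeCat.ofHom f) t) t

/-! The structure `L a` itself supplies the `V`-functor `L a t : (F.obj X, L a) → (V, hom)`, which
by hypothesis is some `λ_j(f)`. Its term in the infimum is `hom (L a t t) (L a t s)`, and since
`k ≤ L a t t` this is at most `L a t s`. The reverse inequality says that every `λ_j(f)` is a
`V`-functor. -/

section Quantale

variable {V : Type u} [CompleteLattice V] [CommMonoid V]

theorem QuantaleLaw.mul_le_mul_left (hV : QuantaleLaw V) (u : V) {v w : V} (hvw : v ≤ w) :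
    u * v ≤ u * w := by
  have hsup : sSup ({v, w} : Set V) = w := by rw [sSup_pair, sup_eq_right.mpr hvw]
  calc u * v ≤ ⨆ x ∈ ({v, w} : Set V), u * x := le_biSup (u * ·) (Set.mem_insert v {w})
    _ = u * w := by rw [← hV u {v, w}, hsup]

theorem le_qhom_of_mul_le {u v w : V} (h : u * v ≤ w) : v ≤ qhom u w :=
  le_sSup h

theorem QuantaleLaw.qhom_le_of_one_le (hV : QuantaleLaw V) {u : V} (hu : 1 ≤ u) (w : V) :
    qhom u w ≤ w := by
  refine sSup_le fun v (hv : u * v ≤ w) => ?_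
  calc v = v * 1 := (mul_one v).symm
    _ ≤ v * u := hV.mul_le_mul_left v hu
    _ = u * v := mul_comm v u
    _ ≤ w := hv

theorem IsVCat.isVFunctor_qhom {Y : Type v} {b : Y → Y → V} (hb : IsVCat b) (y : Y) :
    IsVFunctor b qhom (b y) :=
  fun _ _ => le_qhom_of_mul_le (hb.2 _ _ _)

end Quantale

theorem stmt_3_general {V : Type u} [CompleteLattice V] [CommMonoid V] (hV : QuantaleLaw V)
    {F : Type u ⥤ Type u} (L : Lifting V F)
    {X : Type u} (a : X → X → V) (ha : IsVCat a)
    {J : Type v} (A : J → Type u) (α : ∀ j, A j → A j → V)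
    (Λ : ∀ j, GenPredLifting V F L (A j) (α j))
    (hsurj : ∀ h : F.obj X → V, IsVFunctor (L.str a) qhom h →
      ∃ (j : J) (f : X → A j), IsVFunctor a (α j) f ∧ h = (Λ j).app a f)
    (t s : F.obj X) :
    L.str a t s = ⨅ j, ⨅ f : {f : X → A j // IsVFunctor a (α j) f},
      qhom ((Λ j).app a f.1 t) ((Λ j).app a f.1 s) := by
  have hLa := L.isVCat a ha
  obtain ⟨j, f, hf, heq⟩ := hsurj (L.str a t) (hLa.isVFunctor_qhom t)
  refine le_antisymm (le_iInf₂ fun j f => (Λ j).isVFunctor a ha f.1 f.2 t s) ?_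
  calc (⨅ j, ⨅ f : {f : X → A j // IsVFunctor a (α j) f},
        qhom ((Λ j).app a f.1 t) ((Λ j).app a f.1 s))
      ≤ qhom ((Λ j).app a f t) ((Λ j).app a f s) :=
        (iInf_le _ j).trans (iInf_le _ (Subtype.mk f hf))
    _ = qhom (L.str a t t) (L.str a t s) := by rw [heq]
    _ ≤ L.str a t s := hV.qhom_le_of_one_le (hLa.1 t) _

/-- if every `V`-functor `(F.obj X, L a) → (V,hom)` arises from a family of
generalized predicate liftings, then `L a` is the initial structure w.r.t. that family. -/
theorem stmt_3 {V : Type u} [CompleteLattice V] [CommMonoid V] (hV : QuantaleLaw V)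
    {F : Type u ⥤ Type u} (L : Lifting V F)
    {X : Type u} (a : X → X → V) (ha : IsVCat a)
    {J : Type v} (A : J → Type u) (α : ∀ j, A j → A j → V) (hα : ∀ j, IsVCat (α j))
    (Λ : ∀ j, GenPredLifting V F L (A j) (α j))
    (hsurj : ∀ h : F.obj X → V, IsVFunctor (L.str a) qhom h →
      ∃ (j : J) (f : X → A j), IsVFunctor a (α j) f ∧ h = (Λ j).app a f)
    (t s : F.obj X) :
    L.str a t s = ⨅ j, ⨅ f : {f : X → A j // IsVFunctor a (α j) f},
      qhom ((Λ j).app a f.1 t) ((Λ j).app a f.1 s) :=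
  stmt_3_general hV L a ha A α Λ hsurj t s
end

section
/- Let V be a commutative unital quantale, F : Type u ⥤ Type u a functor, and L a lifting of F to V-Cat that preserves initial morphisms. Then for every V-category (X,a) and all 𝔵,𝔶 ∈ F.obj X: L a 𝔵 𝔶 equals the infimum, taken over all types κ : Type u, all κ-ary predicate liftings λ for F that are compatible with L, and all V-functors f : (X,a) → V^κ, of hom (λ_X f 𝔵) (λ_X f 𝔶). (Every lifting preserving initial morphisms is Kantorovich.) -/
universe u v w

open CategoryTheory

/-
The Yoneda embedding `x ↦ a (-, x)` of `(X, a)` into `V^X` is initial, so `L a` is the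
restriction of `L` on `V^X` along it. For `t₀ ∈ F(V^X)`, the map `p ↦ L(F p -)(t₀, -)` is an
`X`-ary predicate lifting, compatible with `L` because `F p` is a `V`-functor and
representables are `V`-functors into `(V, hom)`. Taking `t₀` the image of `t` and `p` the Yoneda
embedding, the Kantorovich bound becomes `hom (L a (t, t), L a (t, s)) ≤ L a (t, s)`.
-/

namespace QuantaleLaw

variable {V : Type u} [CompleteLattice V] [CommMonoid V]

lemma mul_le_mul_left_s7 (hV : QuantaleLaw V) (u : V) {v v' : V} (h : v ≤ v') :
    u * v ≤ u * v' := by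
  have hsup := hV u {v, v'}
  rw [sSup_pair, sup_eq_right.mpr h] at hsup
  rw [hsup]
  exact le_biSup _ (Set.mem_insert v _)

lemma mul_le_mul_right (hV : QuantaleLaw V) (v : V) {u u' : V} (h : u ≤ u') :
    u * v ≤ u' * v := by
  simpa only [mul_comm _ v] using hV.mul_le_mul_left_s7 v h

lemma mul_qhom_le (hV : QuantaleLaw V) (u w : V) : u * qhom u w ≤ w := by
  rw [qhom, hV u]
  exact iSup₂_le fun _ hv => hv

lemma qhom_mul_qhom_le (hV : QuantaleLaw V) (u v w : V) :
    qhom u v * qhom v w ≤ qhom u w := by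
  refine le_sSup ?_
  calc u * (qhom u v * qhom v w) = u * qhom u v * qhom v w := (mul_assoc _ _ _).symm
    _ ≤ v * qhom v w := hV.mul_le_mul_right _ (hV.mul_qhom_le u v)
    _ ≤ w := hV.mul_qhom_le v w

lemma qhom_le_of_one_le_s7 (hV : QuantaleLaw V) {u : V} (h : 1 ≤ u) (w : V) :
    qhom u w ≤ w :=
  sSup_le fun v hv =>
    calc v = 1 * v := (one_mul v).symm
      _ ≤ u * v := hV.mul_le_mul_right v h
      _ ≤ w := hv

lemma isVCat_powStr (hV : QuantaleLaw V) (κ : Type v) : IsVCat (powStr (V := V) κ) := by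
  refine ⟨fun p => le_iInf fun i => le_sSup (by simp), fun p q r => le_iInf fun i => ?_⟩
  calc powStr κ p q * powStr κ q r ≤ qhom (p i) (q i) * qhom (q i) (r i) :=
        (hV.mul_le_mul_right _ (iInf_le _ i)).trans (hV.mul_le_mul_left_s7 _ (iInf_le _ i))
    _ ≤ qhom (p i) (r i) := hV.qhom_mul_qhom_le _ _ _

end QuantaleLaw

namespace IsVCat

variable {V : Type u} [CompleteLattice V] [CommMonoid V] {X : Type v} {a : X → X → V}

lemma isVFunctor_qhom_s7 (ha : IsVCat a) (x : X) : IsVFunctor a qhom (a x) :=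
  fun y z => le_sSup (ha.2 x y z)

lemma isVFunctor_flip (ha : IsVCat a) : IsVFunctor a (powStr X) (flip a) :=
  fun x y => le_iInf fun z => le_sSup (ha.2 z x y)

lemma isInitialVFunctor_flip (hV : QuantaleLaw V) (ha : IsVCat a) :
    IsInitialVFunctor a (powStr X) (flip a) :=
  fun x y => le_antisymm (ha.isVFunctor_flip x y)
    ((iInf_le _ x).trans (hV.qhom_le_of_one_le_s7 (ha.1 x) _))

end IsVCat

namespace Lifting

variable {V : Type u} [CompleteLattice V] [CommMonoid V] {F : Type u ⥤ Type u}

def predLiftingAt (L : Lifting V F) {κ : Type u} (t₀ : F.obj (κ → V)) : PredLifting V F κ where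
  app p w := L.str (powStr κ) t₀ (F.map (TypeCat.ofHom p) w)
  natural f p w := congrArg (L.str (powStr κ) t₀)
    (F.map_comp_apply (TypeCat.ofHom f) (TypeCat.ofHom p) w)

lemma compatible_predLiftingAt (hV : QuantaleLaw V) (L : Lifting V F) {κ : Type u}
    (t₀ : F.obj (κ → V)) : Compatible L (L.predLiftingAt t₀) := by
  intro Z c hc p hp w w'
  have hpow := hV.isVCat_powStr κ
  exact (L.map c (powStr κ) p hc hpow hp w w').trans
    ((L.isVCat _ hpow).isVFunctor_qhom_s7 t₀ _ _)

end Lifting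

/-- every lifting preserving initial morphisms is Kantorovich, w.r.t.
the class of all compatible predicate liftings. -/
theorem stmt_7 {V : Type u} [CompleteLattice V] [CommMonoid V] (hV : QuantaleLaw V)
    {F : Type u ⥤ Type u} (L : Lifting V F)
    (hpres : ∀ {X Y : Type u} (a : X → X → V) (b : Y → Y → V) (f : X → Y),
      IsVCat a → IsVCat b → IsInitialVFunctor a b f →
      IsInitialVFunctor (L.str a) (L.str b) (F.map (TypeCat.ofHom f)))
    {X : Type u} (a : X → X → V) (ha : IsVCat a) (t s : F.obj X) :
    L.str a t s =
      ⨅ (κ : Type u) (lam : {lam : PredLifting V F κ // Compatible L lam})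
        (f : {f : X → κ → V // IsVFunctor a (powStr κ) f}),
        qhom (lam.1.app f.1 t) (lam.1.app f.1 s) := by
  refine le_antisymm
    (le_iInf fun κ => le_iInf fun lam => le_iInf fun f => lam.2 X a ha f.1 f.2 t s) ?_
  let t₀ := F.map (TypeCat.ofHom (flip a)) t
  have hinit := hpres a (powStr X) (flip a) ha (hV.isVCat_powStr X) (ha.isInitialVFunctor_flip hV)
  refine iInf_le_of_le X (iInf_le_of_le ⟨_, L.compatible_predLiftingAt hV t₀⟩
    (iInf_le_of_le ⟨flip a, ha.isVFunctor_flip⟩ ?_))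
  change qhom (L.str (powStr X) t₀ t₀) (L.str (powStr X) t₀ (F.map (TypeCat.ofHom (flip a)) s))
    ≤ L.str a t s
  rw [← hinit, ← hinit]
  exact hV.qhom_le_of_one_le_s7 ((L.isVCat a ha).1 t) _
end
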